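/- Suppose a discrete group G acts on a row-finite, finitely aligned multitree E with no sources, with quotient graph Γ = G\E. Suppose for every vertex v ∈ Γ^0 there is a loop η = η_1⋯η_m in Γ such that (i) η has an entrance, or [G_{r(η_i)} : G_{η_i}] ≥ 2 for some i, and (ii) there is a path from r(η) to v. Then the induced action G ↷ ∂E is locally contractive. -/
import Mathlib


/-- A directed graph: vertices, edges, and range/source maps. -/
structure DirGraph where
  V : Type
  E : Type
  r : E → V
  s : E → V

namespace DirGraph

/-- `G.IsDPath v w p` : `p` is a directed path from `w` to `v`, i.e. a (possibly empty)
composable sequence of edges with range `v` and source `w`. -/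
def IsDPath (G : DirGraph) : G.V → G.V → List G.E → Prop
  | v, w, [] => v = w
  | v, w, e :: p => G.r e = v ∧ G.IsDPath (G.s e) w p

/-- The relation `v ≤ w` : there is a directed path from `w` to `v`. -/
def Le (G : DirGraph) (v w : G.V) : Prop := ∃ p, G.IsDPath v w p

/-- A multitree: there is at most one directed path between any two vertices. -/
def IsMultitree (G : DirGraph) : Prop :=
  ∀ v w p q, G.IsDPath v w p → G.IsDPath v w q → p = q

/-- Row-finite: every vertex receives finitely many edges. -/
def RowFinite (G : DirGraph) : Prop := ∀ v, {e : G.E | G.r e = v}.Finite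

/-- No sources: every vertex receives at least one edge. -/
def NoSources (G : DirGraph) : Prop := ∀ v, ∃ e, G.r e = v

/-- The set of minimal common upper bounds of `v` and `w`. -/
def mub (G : DirGraph) (v w : G.V) : Set G.V :=
  {u | G.Le v u ∧ G.Le w u ∧ ∀ u', G.Le v u' → G.Le w u' → G.Le u' u → u' = u}

/-- Finitely aligned: any two vertices have finitely many minimal common upper bounds. -/
def FinAligned (G : DirGraph) : Prop := ∀ v w, (G.mub v w).Finite

/-- Infinite (directed) paths in `G`. -/
def InfPath (G : DirGraph) := {l : ℕ → G.E // ∀ n, G.s (l n) = G.r (l (n + 1))}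

/-- Shift-tail equivalence of infinite paths. -/
def stEquiv (G : DirGraph) (a b : G.InfPath) : Prop :=
  ∃ m n : ℕ, ∀ k, a.1 (m + k) = b.1 (n + k)

/-- The boundary `∂G`: shift-tail equivalence classes of infinite paths. -/
def Bdry (G : DirGraph) := Quot G.stEquiv

/-- The cylinder set `Z_∂(v) ⊆ ∂G` of boundary classes of infinite paths with range `v`. -/
def Zb (G : DirGraph) (v : G.V) : Set G.Bdry :=
  {x | ∃ l : G.InfPath, G.r (l.1 0) = v ∧ Quot.mk G.stEquiv l = x}

/-- The cylinder-set topology on the boundary `∂G`. -/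
def bdryTop (G : DirGraph) : TopologicalSpace G.Bdry :=
  TopologicalSpace.generateFrom {S | ∃ v, S = G.Zb v}

/-- The cylinder set `Z(v) ⊆ Ω = G.V ⊕ ∂G`: vertices `w` with a path from `w` to `v`,
together with boundary classes of infinite paths through `v`. -/
def Zfull (G : DirGraph) (v : G.V) : Set (G.V ⊕ G.Bdry) :=
  {x | Sum.elim (fun w => G.Le v w) (fun b => b ∈ G.Zb v) x}

end DirGraph

namespace DirGraph

variable {Γgrp : Type} [Group Γgrp]

/-- The quotient directed graph `G\E` of a graph action: vertices and edges are the
orbits of vertices and edges. -/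
def quotGraph (Γgrp : Type) [Group Γgrp] (E : DirGraph)
    [MulAction Γgrp E.V] [MulAction Γgrp E.E]
    (hr : ∀ (g : Γgrp) (e : E.E), E.r (g • e) = g • E.r e)
    (hs : ∀ (g : Γgrp) (e : E.E), E.s (g • e) = g • E.s e) : DirGraph where
  V := Quotient (MulAction.orbitRel Γgrp E.V)
  E := Quotient (MulAction.orbitRel Γgrp E.E)
  r := Quotient.map E.r (by
    intro a b hab
    obtain ⟨g, hg⟩ := hab
    exact ⟨g, by simp only [← hr, hg]⟩)
  s := Quotient.map E.s (by
    intro a b hab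
    obtain ⟨g, hg⟩ := hab
    exact ⟨g, by simp only [← hs, hg]⟩)

/-- The induced action of a group element on infinite paths. -/
def actInf (E : DirGraph) [MulAction Γgrp E.V] [MulAction Γgrp E.E]
    (hr : ∀ (g : Γgrp) (e : E.E), E.r (g • e) = g • E.r e)
    (hs : ∀ (g : Γgrp) (e : E.E), E.s (g • e) = g • E.s e)
    (g : Γgrp) (l : E.InfPath) : E.InfPath :=
  ⟨fun n => g • l.1 n, fun n => by rw [hs, hr, l.2 n]⟩

/-- The induced action of a group element on the boundary `∂E`. -/
def actBdry (E : DirGraph) [MulAction Γgrp E.V] [MulAction Γgrp E.E]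
    (hr : ∀ (g : Γgrp) (e : E.E), E.r (g • e) = g • E.r e)
    (hs : ∀ (g : Γgrp) (e : E.E), E.s (g • e) = g • E.s e)
    (g : Γgrp) : E.Bdry → E.Bdry :=
  Quot.map (E.actInf hr hs g) (by
    rintro a b ⟨m, n, h⟩
    exact ⟨m, n, fun k => by simp only [actInf, h k]⟩)

end DirGraph

namespace DirGraph

variable {E : DirGraph}

theorem isDPath_append {v u w : E.V} {p q : List E.E}
    (hp : E.IsDPath v u p) (hq : E.IsDPath u w q) : E.IsDPath v w (p ++ q) := by
  induction p generalizing v with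
  | nil => simp only [IsDPath] at hp; subst hp; simpa using hq
  | cons e p ih => exact ⟨hp.1, ih hp.2⟩

theorem isDPath_split {v w : E.V} {p q : List E.E}
    (h : E.IsDPath v w (p ++ q)) : ∃ u, E.IsDPath v u p ∧ E.IsDPath u w q := by
  induction p generalizing v with
  | nil => exact ⟨v, rfl, h⟩
  | cons e p ih =>
    obtain ⟨u, h1, h2⟩ := ih h.2
    exact ⟨u, ⟨h.1, h1⟩, h2⟩

theorem isDPath_end_unique {v w w' : E.V} {p : List E.E}
    (h : E.IsDPath v w p) (h' : E.IsDPath v w' p) : w = w' := by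
  induction p generalizing v with
  | nil => exact h.symm.trans h'
  | cons e p ih => exact ih h.2 h'.2

theorem Le.refl (v : E.V) : E.Le v v := ⟨[], rfl⟩

theorem Le.trans {a b c : E.V} (h : E.Le a b) (h' : E.Le b c) : E.Le a c := by
  obtain ⟨p, hp⟩ := h; obtain ⟨q, hq⟩ := h'
  exact ⟨p ++ q, isDPath_append hp hq⟩


/-- consing an edge onto an infinite path -/
def consInf (e : E.E) (l : E.InfPath) (h : E.s e = E.r (l.1 0)) : E.InfPath :=
  ⟨fun n => Nat.rec e (fun k _ => l.1 k) n, by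
    intro n
    cases n with
    | zero => exact h
    | succ n => exact l.2 n⟩

theorem stEquiv_equivalence : Equivalence E.stEquiv := by
  constructor
  · intro a; exact ⟨0, 0, fun k => rfl⟩
  · rintro a b ⟨m, n, h⟩; exact ⟨n, m, fun k => (h k).symm⟩
  · rintro a b c ⟨m, n, h⟩ ⟨m', n', h'⟩
    refine ⟨m + (max n m' - n), n' + (max n m' - m'), fun k => ?_⟩
    have h1 := h ((max n m' - n) + k)
    have h2 := h' ((max n m' - m') + k)
    have e1 : m + (max n m' - n) + k = m + ((max n m' - n) + k) := by omega
    have e2 : n + ((max n m' - n) + k) = m' + ((max n m' - m') + k) := by omega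
    have e3 : n' + ((max n m' - m') + k) = n' + (max n m' - m') + k := by omega
    rw [e1, h1, e2, h2, e3]

theorem quot_mk_eq_iff {a b : E.InfPath} :
    Quot.mk E.stEquiv a = Quot.mk E.stEquiv b ↔ E.stEquiv a b := by
  rw [Quot.eq]
  exact Equivalence.eqvGen_iff stEquiv_equivalence

/-- shift of an infinite path -/
def shiftInf (l : E.InfPath) (n : ℕ) : E.InfPath :=
  ⟨fun k => l.1 (n + k), fun k => by
    show E.s (l.1 (n + k)) = E.r (l.1 (n + (k + 1)))
    rw [← Nat.add_assoc]; exact l.2 (n + k)⟩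

theorem stEquiv_shiftInf (l : E.InfPath) (n : ℕ) : E.stEquiv (shiftInf l n) l :=
  ⟨0, n, fun k => by simp [shiftInf]⟩

/-- prepend a finite path onto an infinite path -/
theorem prepend_exists {v w : E.V} {P : List E.E} (hP : E.IsDPath v w P)
    (l : E.InfPath) (hl : E.r (l.1 0) = w) :
    ∃ l' : E.InfPath, E.r (l'.1 0) = v ∧
      (∀ i (h : i < P.length), l'.1 i = P.get ⟨i, h⟩) ∧
      (∀ k, l'.1 (P.length + k) = l.1 k) := by
  induction P generalizing v with
  | nil =>
    simp only [IsDPath] at hP; subst hP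
    exact ⟨l, hl, by simp, fun k => by simp⟩
  | cons e P ih =>
    obtain ⟨l'', h0, hpre, htail⟩ := ih hP.2
    have hse : E.s e = E.r (l''.1 0) := by rw [h0]
    refine ⟨consInf e l'' hse, by simpa [consInf] using hP.1, ?_, ?_⟩
    · intro i h
      cases i with
      | zero => rfl
      | succ i => exact hpre i (Nat.succ_lt_succ_iff.mp h)
    · intro k
      have h2 : (e :: P).length + k = (P.length + k) + 1 := by
        simp [Nat.succ_add, Nat.add_comm, Nat.add_assoc, Nat.add_left_comm]
      rw [h2]
      exact htail k

/-- from any vertex there is an infinite path (no sources) -/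
theorem exists_infPath (hnsrc : E.NoSources) (v : E.V) :
    ∃ l : E.InfPath, E.r (l.1 0) = v := by
  choose f hf using hnsrc
  let g : ℕ → E.E := fun n => Nat.rec (f v) (fun _ e => f (E.s e)) n
  refine ⟨⟨g, fun n => (hf _).symm⟩, hf v⟩

/-- the prefix of an infinite path is a directed path -/
theorem isDPath_prefix (l : E.InfPath) :
    ∀ (n k : ℕ), E.IsDPath (E.r (l.1 k)) (E.r (l.1 (k + n)))
      ((List.range n).map fun i => l.1 (k + i)) := by
  intro n
  induction n with
  | zero => intro k; simp [IsDPath]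
  | succ n ih =>
    intro k
    simp only [List.range_succ_eq_map, List.map_cons, List.map_map]
    refine ⟨by rw [Nat.add_zero], ?_⟩
    rw [Nat.add_zero, l.2 k]
    have hl : (List.range n).map ((fun i => l.1 (k + i)) ∘ Nat.succ)
        = (List.range n).map (fun i => l.1 ((k + 1) + i)) :=
      List.map_congr_left (fun a _ => by
        show l.1 (k + Nat.succ a) = l.1 ((k + 1) + a)
        exact congrArg _ (by omega))
    rw [hl]
    have e : k + (n + 1) = (k + 1) + n := by omega
    rw [e]
    exact ih (k + 1)


theorem Zb_mono {a c : E.V} (h : E.Le a c) : E.Zb c ⊆ E.Zb a := by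
  rintro x ⟨l, hl0, hlx⟩
  obtain ⟨P, hP⟩ := h
  obtain ⟨l', h0, _, htail⟩ := prepend_exists hP l hl0
  refine ⟨l', h0, ?_⟩
  rw [← hlx]
  exact Quot.sound ⟨P.length, 0, fun k => by rw [Nat.zero_add]; exact htail k⟩

theorem mem_Zb_shift (l : E.InfPath) (n : ℕ) :
    Quot.mk E.stEquiv l ∈ E.Zb (E.r (l.1 n)) :=
  ⟨shiftInf l n, by simp [shiftInf], Quot.sound (stEquiv_shiftInf l n)⟩

theorem Zb_nonempty (hnsrc : E.NoSources) (v : E.V) : (E.Zb v).Nonempty := by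
  obtain ⟨l, hl⟩ := exists_infPath hnsrc v
  exact ⟨Quot.mk _ l, l, hl, rfl⟩

theorem le_of_prefix (l : E.InfPath) (n : ℕ) : E.Le (E.r (l.1 0)) (E.r (l.1 n)) := by
  refine ⟨(List.range n).map fun i => l.1 (0 + i), ?_⟩
  have := isDPath_prefix l n 0
  rwa [Nat.zero_add] at this

theorem exists_common_upper {a b : E.V} {x : E.Bdry}
    (ha : x ∈ E.Zb a) (hb : x ∈ E.Zb b) :
    ∃ c, E.Le a c ∧ E.Le b c ∧ x ∈ E.Zb c := by
  obtain ⟨l, hl0, hlx⟩ := ha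
  obtain ⟨l', hl0', hlx'⟩ := hb
  have hq : Quot.mk E.stEquiv l = Quot.mk E.stEquiv l' := hlx.trans hlx'.symm
  obtain ⟨m, n, hmn⟩ := quot_mk_eq_iff.mp hq
  have hc : E.r (l.1 m) = E.r (l'.1 n) := by
    have := hmn 0; rw [Nat.add_zero, Nat.add_zero] at this; rw [this]
  refine ⟨E.r (l.1 m), ?_, ?_, ?_⟩
  · rw [← hl0]; exact le_of_prefix l m
  · rw [← hl0', hc]; exact le_of_prefix l' n
  · rw [← hlx]; exact mem_Zb_shift l m

theorem isOpen_Zb (v : E.V) : @IsOpen _ E.bdryTop (E.Zb v) :=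
  TopologicalSpace.isOpen_generateFrom_of_mem ⟨v, rfl⟩

theorem open_contains_Zb {U : Set E.Bdry} (hU : @IsOpen _ E.bdryTop U) :
    ∀ x ∈ U, ∃ v, x ∈ E.Zb v ∧ E.Zb v ⊆ U := by
  induction hU with
  | basic S hS =>
    obtain ⟨v, rfl⟩ := hS
    exact fun x hx => ⟨v, hx, subset_rfl⟩
  | univ =>
    intro x _
    obtain ⟨l, rfl⟩ := Quot.exists_rep x
    exact ⟨E.r (l.1 0), ⟨l, rfl, rfl⟩, Set.subset_univ _⟩
  | inter U V hU hV ihU ihV =>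
    intro x hx
    obtain ⟨a, hxa, haU⟩ := ihU x hx.1
    obtain ⟨b, hxb, hbV⟩ := ihV x hx.2
    obtain ⟨c, hac, hbc, hxc⟩ := exists_common_upper hxa hxb
    exact ⟨c, hxc, fun y hy => ⟨haU (Zb_mono hac hy), hbV (Zb_mono hbc hy)⟩⟩
  | sUnion S hS ih =>
    intro x hx
    obtain ⟨T, hT, hxT⟩ := hx
    obtain ⟨v, h1, h2⟩ := ih T hT x hxT
    exact ⟨v, h1, h2.trans (Set.subset_sUnion_of_mem hT)⟩


theorem le_antisymm' (hmt : E.IsMultitree) {a b : E.V} (h : E.Le a b) (h' : E.Le b a) :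
    a = b := by
  obtain ⟨p, hp⟩ := h
  obtain ⟨q, hq⟩ := h'
  have hpq : E.IsDPath a a (p ++ q) := isDPath_append hp hq
  have h0 : E.IsDPath a a [] := rfl
  have := hmt a a (p ++ q) [] hpq h0
  rcases List.append_eq_nil_iff.mp this with ⟨rfl, -⟩
  exact hp

theorem mub_exists (hmt : E.IsMultitree) {v w u : E.V} (hv : E.Le v u) (hw : E.Le w u) :
    ∃ m ∈ E.mub v w, E.Le m u := by
  obtain ⟨P, hP⟩ := hv
  suffices H : ∀ (N : ℕ) (u : E.V) (P : List E.E), P.length ≤ N → E.IsDPath v u P →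
      E.Le w u → ∃ m ∈ E.mub v w, E.Le m u from H P.length u P le_rfl hP hw
  intro N
  induction N with
  | zero =>
    intro u P hlen hP hw
    have : P = [] := List.length_eq_zero_iff.mp (Nat.le_zero.mp hlen)
    subst this
    have huv : v = u := hP
    subst huv
    refine ⟨v, ⟨Le.refl v, hw, ?_⟩, Le.refl v⟩
    intro u' h1 _ h3
    exact le_antisymm' hmt h3 h1
  | succ N ih =>
    intro u P hlen hP hw
    by_cases hm : u ∈ E.mub v w
    · exact ⟨u, hm, Le.refl u⟩
    · have hnm : ∃ u', E.Le v u' ∧ E.Le w u' ∧ E.Le u' u ∧ u' ≠ u := by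
        by_contra hc
        push_neg at hc
        exact hm ⟨⟨P, hP⟩, hw, hc⟩
      obtain ⟨u', h1, h2, h3, hne⟩ := hnm
      obtain ⟨Q, hQ⟩ := h1
      obtain ⟨R, hR⟩ := h3
      have hRne : R ≠ [] := by
        rintro rfl
        exact hne hR
      have hcomp : E.IsDPath v u (Q ++ R) := isDPath_append hQ hR
      have hPQ : P = Q ++ R := hmt v u P (Q ++ R) hP hcomp
      have hQlen : Q.length ≤ N := by
        have : P.length = Q.length + R.length := by rw [hPQ, List.length_append]
        have hR1 : 1 ≤ R.length := List.length_pos_iff.mpr hRne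
        omega
      obtain ⟨m, hm', hmu'⟩ := ih u' Q hQlen hQ h2
      exact ⟨m, hm', hmu'.trans ⟨R, hR⟩⟩

theorem isClosed_Zb (hmt : E.IsMultitree) (hfa : E.FinAligned) (v : E.V) :
    @IsClosed _ E.bdryTop (E.Zb v) := by
  letI := E.bdryTop
  classical
  constructor
  have hcompl : (E.Zb v)ᶜ = ⋃₀ {S | ∃ w, S = E.Zb w ∧ E.Zb w ∩ E.Zb v = ∅} := by
    ext x
    constructor
    · intro hx
      obtain ⟨l, rfl⟩ := Quot.exists_rep x
      set w0 := E.r (l.1 0) with hw0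
      have hFin := hfa v w0
      set D := hFin.toFinset.sup
        (fun m => if h : E.Le w0 m then h.choose.length else 0) with hD
      set n := D + 1 with hn
      refine ⟨E.Zb (E.r (l.1 n)), ⟨E.r (l.1 n), rfl, ?_⟩, mem_Zb_shift l n⟩
      rw [Set.eq_empty_iff_forall_notMem]
      rintro y ⟨hy1, hy2⟩
      obtain ⟨u, hwnu, hvu, -⟩ := exists_common_upper hy1 hy2
      have hw0u : E.Le w0 u := (le_of_prefix l n).trans hwnu
      obtain ⟨m, hmub, hmu⟩ := mub_exists hmt hvu hw0u
      have hw0m : E.Le w0 m := hmub.2.1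
      set Q := hw0m.choose with hQdef
      have hQ : E.IsDPath w0 m Q := hw0m.choose_spec
      have haD : Q.length ≤ D := by
        have hmem : m ∈ hFin.toFinset := hFin.mem_toFinset.mpr hmub
        have h2 : (if h : E.Le w0 m then h.choose.length else 0) ≤ D :=
          Finset.le_sup (f := fun m => if h : E.Le w0 m then h.choose.length else 0) hmem
        rwa [dif_pos hw0m] at h2
      set a := Q.length with ha
      have han : a < n := by omega
      -- two paths from u to w0
      obtain ⟨R, hR⟩ := hmu
      obtain ⟨R', hR'⟩ := hwnu
      have hpref : E.IsDPath w0 (E.r (l.1 n)) ((List.range n).map fun i => l.1 (0 + i)) := by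
        have := isDPath_prefix l n 0
        rwa [Nat.zero_add] at this
      have hP1 : E.IsDPath w0 u (Q ++ R) := isDPath_append hQ hR
      have hP2 : E.IsDPath w0 u (((List.range n).map fun i => l.1 (0 + i)) ++ R') :=
        isDPath_append hpref hR'
      have heq : Q ++ R = ((List.range n).map fun i => l.1 (0 + i)) ++ R' :=
        hmt w0 u _ _ hP1 hP2
      -- split the prefix at a
      have hsplit : (List.range n).map (fun i => l.1 (0 + i))
          = ((List.range a).map fun i => l.1 (0 + i))
            ++ ((List.range (n - a)).map fun i => l.1 (0 + (a + i))) := by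
        have h1 : n = a + (n - a) := by omega
        rw [h1, List.range_add, List.map_append, List.map_map]
        have h2 : a + (n - a) - a = n - a := by omega
        rw [h2]
        rfl
      rw [hsplit, List.append_assoc] at heq
      have hlen : Q.length = ((List.range a).map fun i => l.1 (0 + i)).length := by
        simp [ha]
      have hQeq : Q = (List.range a).map fun i => l.1 (0 + i) :=
        List.append_inj_left heq hlen
      have hprefa : E.IsDPath w0 (E.r (l.1 a)) ((List.range a).map fun i => l.1 (0 + i)) := by
        have := isDPath_prefix l a 0
        rwa [Nat.zero_add] at this
      rw [hQeq] at hQ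
      have hma : m = E.r (l.1 a) := isDPath_end_unique hQ hprefa
      have hxZv : Quot.mk E.stEquiv l ∈ E.Zb v := by
        apply Zb_mono (hma ▸ hmub.1)
        exact mem_Zb_shift l a
      exact hx hxZv
    · rintro ⟨S, ⟨w, rfl, hdisj⟩, hxS⟩ hxv
      rw [Set.eq_empty_iff_forall_notMem] at hdisj
      exact hdisj x ⟨hxS, hxv⟩
  rw [hcompl]
  apply isOpen_sUnion
  rintro S ⟨w, rfl, -⟩
  exact isOpen_Zb w


section Quot

variable {Γgrp : Type} [Group Γgrp]

theorem orbit_mk_eq_iff {α : Type} [MulAction Γgrp α] {a b : α} :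
    (Quotient.mk (MulAction.orbitRel Γgrp α) a = Quotient.mk (MulAction.orbitRel Γgrp α) b)
      ↔ ∃ g : Γgrp, g • b = a := by
  constructor
  · intro h
    have h3 := Quotient.exact h
    have h4 : a ∈ MulAction.orbit Γgrp b := h3
    exact MulAction.mem_orbit_iff.mp h4
  · rintro ⟨g, hg⟩
    exact Quotient.sound
      (show a ∈ MulAction.orbit Γgrp b from MulAction.mem_orbit_iff.mpr ⟨g, hg⟩)

variable (E : DirGraph) [MulAction Γgrp E.V] [MulAction Γgrp E.E]
   (hr : ∀ (g : Γgrp) (e : E.E), E.r (g • e) = g • E.r e)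
   (hs : ∀ (g : Γgrp) (e : E.E), E.s (g • e) = g • E.s e)

theorem quot_r_mk (e : E.E) :
    (quotGraph Γgrp E hr hs).r (Quotient.mk (MulAction.orbitRel Γgrp E.E) e)
      = Quotient.mk (MulAction.orbitRel Γgrp E.V) (E.r e) := rfl

theorem quot_s_mk (e : E.E) :
    (quotGraph Γgrp E hr hs).s (Quotient.mk (MulAction.orbitRel Γgrp E.E) e)
      = Quotient.mk (MulAction.orbitRel Γgrp E.V) (E.s e) := rfl

theorem lift_path (v : E.V) (q : List (quotGraph Γgrp E hr hs).E)
    (x : (quotGraph Γgrp E hr hs).V)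
    (hq : (quotGraph Γgrp E hr hs).IsDPath (Quotient.mk (MulAction.orbitRel Γgrp E.V) v) x q) :
    ∃ (P : List E.E) (w : E.V), E.IsDPath v w P ∧
      Quotient.mk (MulAction.orbitRel Γgrp E.V) w = x ∧
      P.map (Quotient.mk (MulAction.orbitRel Γgrp E.E)) = q := by
  induction q generalizing v with
  | nil => exact ⟨[], v, rfl, hq, rfl⟩
  | cons eb q ih =>
    obtain ⟨hre, hrest⟩ := hq
    obtain ⟨e', he'⟩ := Quotient.exists_rep eb
    rw [← he', quot_r_mk] at hre
    obtain ⟨g, hg⟩ := orbit_mk_eq_iff.mp hre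
    set e₁ := g⁻¹ • e' with he₁
    have hre₁ : E.r e₁ = v := by rw [he₁, hr, ← hg, inv_smul_smul]
    have hse₁ : Quotient.mk (MulAction.orbitRel Γgrp E.V) (E.s e₁)
        = (quotGraph Γgrp E hr hs).s eb := by
      rw [← he', quot_s_mk]
      apply orbit_mk_eq_iff.mpr
      exact ⟨g⁻¹, by rw [he₁, hs]⟩
    rw [← hse₁] at hrest
    obtain ⟨P₁, w, hP₁, hw, hmap⟩ := ih (E.s e₁) hrest
    refine ⟨e₁ :: P₁, w, ⟨hre₁, hP₁⟩, hw, ?_⟩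
    rw [List.map_cons, hmap, ← he']
    congr 1
    exact orbit_mk_eq_iff.mpr ⟨g⁻¹, he₁.symm⟩

theorem actBdry_mk (γ : Γgrp) (l : E.InfPath) :
    E.actBdry hr hs γ (Quot.mk E.stEquiv l) = Quot.mk E.stEquiv (E.actInf hr hs γ l) := rfl

theorem actBdry_image (γ : Γgrp) (v : E.V) :
    (E.actBdry hr hs γ) '' (E.Zb v) = E.Zb (γ • v) := by
  ext x
  constructor
  · rintro ⟨y, ⟨l, hl, rfl⟩, rfl⟩
    refine ⟨E.actInf hr hs γ l, ?_, rfl⟩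
    show E.r (γ • l.1 0) = γ • v
    rw [hr, hl]
  · rintro ⟨l, hl, rfl⟩
    refine ⟨Quot.mk E.stEquiv (E.actInf hr hs γ⁻¹ l), ⟨E.actInf hr hs γ⁻¹ l, ?_, rfl⟩, ?_⟩
    · show E.r (γ⁻¹ • l.1 0) = v
      rw [hr, hl, inv_smul_smul]
    · rw [actBdry_mk]
      congr 1
      apply Subtype.ext
      funext n
      show γ • (γ⁻¹ • l.1 n) = l.1 n
      rw [smul_inv_smul]

end Quot

end DirGraph

open DirGraph in
/-- If for every vertex `v` of `Γ = G\E` there is a loop `η` in `Γ` which either has an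
entrance or has an edge whose stabiliser has index `≥ 2` in the stabiliser of its range,
and with a path from `r(η)` to `v`, then the action `G ↷ ∂E` is locally contractive. -/
theorem stmt12 (Γgrp : Type) [Group Γgrp] [Countable Γgrp] (E : DirGraph)
    [Countable E.V] [Countable E.E]
    [MulAction Γgrp E.V] [MulAction Γgrp E.E]
    (hr : ∀ (g : Γgrp) (e : E.E), E.r (g • e) = g • E.r e)
    (hs : ∀ (g : Γgrp) (e : E.E), E.s (g • e) = g • E.s e)
    (hmt : E.IsMultitree) (hrow : E.RowFinite) (hnsrc : E.NoSources)
    (hfa : E.FinAligned)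
    (hloop : ∀ v : (quotGraph Γgrp E hr hs).V,
      ∃ (x : (quotGraph Γgrp E hr hs).V) (p : List (quotGraph Γgrp E hr hs).E),
        p ≠ [] ∧ (quotGraph Γgrp E hr hs).IsDPath x x p ∧
        ((∃ e ∈ p, ∃ f g : (quotGraph Γgrp E hr hs).E, f ≠ g ∧
            (quotGraph Γgrp E hr hs).r f = (quotGraph Γgrp E hr hs).r e ∧
            (quotGraph Γgrp E hr hs).r g = (quotGraph Γgrp E hr hs).r e) ∨
          (∃ e ∈ p, ∃ e' : E.E,
            (Quotient.mk (MulAction.orbitRel Γgrp E.E) e' : (quotGraph Γgrp E hr hs).E) = e ∧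
            ∃ γ : Γgrp, γ • E.r e' = E.r e' ∧ γ • e' ≠ e')) ∧
        (∃ q, (quotGraph Γgrp E hr hs).IsDPath v x q)) :
    ∀ U : Set E.Bdry, @IsOpen E.Bdry E.bdryTop U → U.Nonempty →
      ∃ W : Set E.Bdry, W ⊆ U ∧ @IsOpen E.Bdry E.bdryTop W ∧ W.Nonempty ∧
        ∃ γ : Γgrp, (E.actBdry hr hs γ) '' (@closure E.Bdry E.bdryTop W) ⊂ W := by
  intro U hU hUne
  classical
  obtain ⟨x₀, hx₀⟩ := hUne
  obtain ⟨u, hxu, hZuU⟩ := open_contains_Zb hU x₀ hx₀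
  obtain ⟨x, p, hpne, hploop, hcond, q, hq⟩ :=
    hloop (Quotient.mk (MulAction.orbitRel Γgrp E.V) u)
  obtain ⟨Q, ut, hQ, hut, hQmap⟩ := lift_path E hr hs u q x hq
  rw [← hut] at hploop
  obtain ⟨μ, x₁, hμ, hx₁, hμmap⟩ := lift_path E hr hs ut p _ hploop
  obtain ⟨γ, hγ⟩ := orbit_mk_eq_iff.mp hx₁
  -- extract an "entrance" edge pair along the lifted loop
  have hkey : ∃ ℓ ∈ μ, ∃ f' : E.E, f' ≠ ℓ ∧ E.r f' = E.r ℓ := by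
    rcases hcond with ⟨eb, hebp, f, g0, hfg, hfr, hgr⟩ | ⟨eb, hebp, e', he'mk, γ', hγr, hγe⟩
    · rw [← hμmap] at hebp
      obtain ⟨ℓ, hℓμ, hℓmk⟩ := List.mem_map.mp hebp
      have hpick : ∃ h0 : (quotGraph Γgrp E hr hs).E, h0 ≠ eb ∧
          (quotGraph Γgrp E hr hs).r h0 = (quotGraph Γgrp E hr hs).r eb := by
        by_cases hf : f = eb
        · refine ⟨g0, ?_, hgr⟩; rw [← hf]; exact hfg.symm
        · exact ⟨f, hf, hfr⟩
      obtain ⟨h0, hh0ne, hh0r⟩ := hpick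
      obtain ⟨h', hh'⟩ := Quotient.exists_rep h0
      have hthis : Quotient.mk (MulAction.orbitRel Γgrp E.V) (E.r h')
          = Quotient.mk (MulAction.orbitRel Γgrp E.V) (E.r ℓ) := by
        have e1 : (quotGraph Γgrp E hr hs).r h0
            = Quotient.mk (MulAction.orbitRel Γgrp E.V) (E.r h') := by
          rw [← hh']; exact quot_r_mk E hr hs h'
        have e2 : (quotGraph Γgrp E hr hs).r eb
            = Quotient.mk (MulAction.orbitRel Γgrp E.V) (E.r ℓ) := by
          rw [← hℓmk]; exact quot_r_mk E hr hs ℓ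
        rw [← e1, hh0r, e2]
      obtain ⟨g₁, hg₁⟩ := orbit_mk_eq_iff.mp hthis
      refine ⟨ℓ, hℓμ, g₁⁻¹ • h', ?_, by rw [hr, ← hg₁, inv_smul_smul]⟩
      intro hEq
      apply hh0ne
      rw [← hh', ← hℓmk, ← hEq]
      exact (orbit_mk_eq_iff.mpr ⟨g₁⁻¹, rfl⟩).symm
    · rw [← hμmap] at hebp
      obtain ⟨ℓ, hℓμ, hℓmk⟩ := List.mem_map.mp hebp
      have hthis : Quotient.mk (MulAction.orbitRel Γgrp E.E) e'
          = Quotient.mk (MulAction.orbitRel Γgrp E.E) ℓ := by rw [he'mk, ← hℓmk]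
      obtain ⟨h, hh⟩ := orbit_mk_eq_iff.mp hthis
      have hℓe : ℓ = h⁻¹ • e' := by rw [← hh, inv_smul_smul]
      refine ⟨ℓ, hℓμ, h⁻¹ • (γ' • e'), ?_, ?_⟩
      · intro hEq
        apply hγe
        have h2 : h⁻¹ • (γ' • e') = h⁻¹ • e' := by rw [hEq, hℓe]
        exact smul_left_cancel h⁻¹ h2
      · rw [hr, hr, hγr, hℓe, hr]
  obtain ⟨ℓ, hℓμ, f', hf'ne, hf'r⟩ := hkey
  obtain ⟨μ₁, μ₂, hμsplit⟩ := List.append_of_mem hℓμ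
  rw [hμsplit] at hμ
  obtain ⟨y, hμ₁, hℓ2⟩ := isDPath_split hμ
  have hry : E.r ℓ = y := hℓ2.1
  obtain ⟨lc, hlc⟩ := exists_infPath hnsrc (E.s f')
  have hcons : E.s f' = E.r (lc.1 0) := hlc.symm
  have hlf0 : E.r ((consInf f' lc hcons).1 0) = y := by
    rw [show (consInf f' lc hcons).1 0 = f' from rfl, hf'r, hry]
  obtain ⟨lam, hlam0, hlampre, hlamtail⟩ := prepend_exists hμ₁ (consInf f' lc hcons) hlf0
  have hlama : lam.1 μ₁.length = f' := by
    have := hlamtail 0; rwa [Nat.add_zero] at this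
  have hz₀mem : Quot.mk E.stEquiv lam ∈ E.Zb ut := ⟨lam, hlam0, rfl⟩
  have hz₀not : Quot.mk E.stEquiv lam ∉ E.Zb x₁ := by
    rintro ⟨l'', hl''0, hl''eq⟩
    obtain ⟨m, k, hmk⟩ := quot_mk_eq_iff.mp hl''eq
    have hz : E.r (l''.1 m) = E.r (lam.1 k) := by
      have := hmk 0; rw [Nat.add_zero, Nat.add_zero] at this; rw [this]
    have hA : E.IsDPath ut (E.r (lam.1 k)) ((List.range k).map fun i => lam.1 (0 + i)) := by
      have := isDPath_prefix lam k 0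
      rwa [Nat.zero_add, hlam0] at this
    have hPz : E.IsDPath x₁ (E.r (lam.1 k)) ((List.range m).map fun i => l''.1 (0 + i)) := by
      have := isDPath_prefix l'' m 0
      rwa [Nat.zero_add, hl''0, hz] at this
    have hB : E.IsDPath ut (E.r (lam.1 k))
        ((μ₁ ++ ℓ :: μ₂) ++ (List.range m).map fun i => l''.1 (0 + i)) :=
      isDPath_append hμ hPz
    have heq := hmt ut (E.r (lam.1 k)) _ _ hA hB
    have hklen := congrArg List.length heq
    simp only [List.length_map, List.length_range, List.length_append,
      List.length_cons] at hklen
    have hks : k = μ₁.length + ((k - μ₁.length - 1) + 1) := by omega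
    have hsplit2 : (List.range k).map (fun i => lam.1 (0 + i))
        = ((List.range μ₁.length).map fun i => lam.1 (0 + i))
          ++ ((List.range ((k - μ₁.length - 1) + 1)).map fun i => lam.1 (0 + (μ₁.length + i))) := by
      conv_lhs => rw [hks]
      rw [List.range_add, List.map_append, List.map_map]
      rfl
    rw [hsplit2, List.append_assoc, List.cons_append] at heq
    have hlens : ((List.range μ₁.length).map fun i => lam.1 (0 + i)).length = μ₁.length := by
      simp
    have hinj := (List.append_inj heq hlens).2
    rw [List.range_succ_eq_map, List.map_cons] at hinj
    have hhead : lam.1 (0 + (μ₁.length + 0)) = ℓ := (List.cons_eq_cons.mp hinj).1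
    have hidx : (0 + (μ₁.length + 0)) = μ₁.length := by omega
    rw [hidx] at hhead
    apply hf'ne
    rw [← hlama]
    exact hhead
  have hcl : @closure E.Bdry E.bdryTop (E.Zb ut) = E.Zb ut := by
    letI := E.bdryTop
    exact (isClosed_Zb hmt hfa ut).closure_eq
  refine ⟨E.Zb ut, (Zb_mono ⟨Q, hQ⟩).trans hZuU, isOpen_Zb ut, Zb_nonempty hnsrc ut, γ, ?_⟩
  rw [hcl, actBdry_image E hr hs γ ut, hγ]
  exact ⟨Zb_mono ⟨_, hμ⟩, fun hcon => hz₀not (hcon hz₀mem)⟩
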